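/- arXiv:2401.00666 — 4 statements merged into one kernel-verified Lean document; each statement's English description precedes it below -/
import Mathlib

section
/- For a path P_n with n ≥ 5 vertices, the chromatic number of its δ-complement equals ⌈(n-2)/2⌉. -/
open scoped Classical
open SimpleGraph

/-- The δ-complement of a graph: `u v` are adjacent iff they are distinct and
either they have equal degrees and are non-adjacent in `G`, or they have
different degrees and are adjacent in `G`. -/
def deltaComp {V : Type*} [Fintype V] (G : SimpleGraph V) : SimpleGraph V where
  Adj u v := u ≠ v ∧ ((G.degree u = G.degree v ∧ ¬ G.Adj u v) ∨
    (G.degree u ≠ G.degree v ∧ G.Adj u v))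
  symm := by
    constructor
    intro u v h
    refine ⟨h.1.symm, ?_⟩
    rcases h.2 with ⟨hd, ha⟩ | ⟨hd, ha⟩
    · exact Or.inl ⟨hd.symm, fun hh => ha hh.symm⟩
    · exact Or.inr ⟨fun hh => hd hh.symm, ha.symm⟩
  loopless := ⟨fun v h => h.1 rfl⟩

/-- The δ-chromatic number: chromatic number of the δ-complement. -/
noncomputable def deltaChrom {V : Type*} [Fintype V] (G : SimpleGraph V) : ℕ∞ :=
  (deltaComp G).chromaticNumber

/-! All interior vertices of `P_n` have degree 2, so among them the δ-complement is the
complement of a path: a colour class of interior vertices is a clique of the bipartite graph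
`P_n`, hence has at most two vertices, and at least `⌈(n-2)/2⌉` colours are needed. Pairing
consecutive interior vertices gives a colouring with that many colours, into which the two
endpoints still fit when `n ≥ 5`. -/

namespace SimpleGraph

variable {V : Type*} [Fintype V] {G : SimpleGraph V}

lemma deltaComp_adj_of_degree_eq {u v : V} (h : G.degree u = G.degree v) :
    (deltaComp G).Adj u v ↔ u ≠ v ∧ ¬G.Adj u v := by
  simp [deltaComp, h]

/-- Vertices of equal degree sharing a colour in `deltaComp G` form a clique of `G`. -/
theorem card_le_mul_card_of_deltaComp_coloring {α : Type*} [Fintype α] {m : ℕ}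
    (hG : G.Colorable m) (C : (deltaComp G).Coloring α) {s : Finset V}
    (hs : ∀ u ∈ s, ∀ v ∈ s, G.degree u = G.degree v) :
    s.card ≤ m * Fintype.card α := by
  rw [← Finset.card_univ]
  refine Finset.card_le_mul_card_image_of_maps_to (f := C) (fun _ _ => Finset.mem_univ _) m
    fun a _ => ?_
  refine IsClique.card_le_of_colorable (fun u hu v hv huv => ?_) hG
  simp only [Finset.coe_filter, Set.mem_ofPred_eq] at hu hv
  by_contra hadj
  exact C.valid ((deltaComp_adj_of_degree_eq (hs u hu.1 v hv.1)).2 ⟨huv, hadj⟩)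
    (hu.2.trans hv.2.symm)

lemma pathGraph_degree {n : ℕ} (hn : 2 ≤ n) (v : Fin n) :
    (pathGraph n).degree v = if (v : ℕ) = 0 ∨ (v : ℕ) = n - 1 then 1 else 2 := by
  rw [← card_neighborFinset_eq_degree]
  split_ifs with h
  · rw [Finset.card_eq_one]
    obtain ⟨w, hw⟩ : ∃ w : Fin n,
        (v : ℕ) = 0 ∧ (w : ℕ) = 1 ∨ (v : ℕ) = n - 1 ∧ (w : ℕ) = n - 2 := by
      rcases h with h | h
      exacts [⟨⟨1, by omega⟩, .inl ⟨h, rfl⟩⟩, ⟨⟨n - 2, by omega⟩, .inr ⟨h, rfl⟩⟩]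
    refine ⟨w, Finset.ext fun x => ?_⟩
    simp only [mem_neighborFinset, pathGraph_adj, Finset.mem_singleton, Fin.ext_iff]
    omega
  · have hne : (⟨v - 1, by omega⟩ : Fin n) ≠ ⟨v + 1, by omega⟩ := by simp
    rw [← Finset.card_pair hne]
    congr 1
    ext x
    simp only [mem_neighborFinset, pathGraph_adj, Finset.mem_insert, Finset.mem_singleton,
      Fin.ext_iff]
    omega

lemma deltaComp_pathGraph_adj {n : ℕ} (hn : 2 ≤ n) (u v : Fin n) :
    (deltaComp (pathGraph n)).Adj u v ↔ (u : ℕ) ≠ v ∧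
      ((((u : ℕ) = 0 ∨ (u : ℕ) = n - 1 ↔ (v : ℕ) = 0 ∨ (v : ℕ) = n - 1) ∧
          ¬((u : ℕ) + 1 = v ∨ (v : ℕ) + 1 = u)) ∨
        (¬((u : ℕ) = 0 ∨ (u : ℕ) = n - 1 ↔ (v : ℕ) = 0 ∨ (v : ℕ) = n - 1) ∧
          ((u : ℕ) + 1 = v ∨ (v : ℕ) + 1 = u))) := by
  have hdeg : (pathGraph n).degree u = (pathGraph n).degree v ↔
      ((u : ℕ) = 0 ∨ (u : ℕ) = n - 1 ↔ (v : ℕ) = 0 ∨ (v : ℕ) = n - 1) := by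
    rw [pathGraph_degree hn u, pathGraph_degree hn v]
    split_ifs <;> simp_all
  simp only [deltaComp, hdeg, pathGraph_adj, ne_eq, Fin.ext_iff]

/-- Interior vertices `2j+1, 2j+2` share colour `j`; the endpoint `n-1` takes colour `0`
(its neighbours `0` and `n-2` do not have it as `n ≥ 5`) and the endpoint `0` the last colour. -/
def deltaComp_pathGraph_coloring (n : ℕ) (hn : 5 ≤ n) :
    (deltaComp (pathGraph n)).Coloring (Fin ((n - 2 + 1) / 2)) :=
  Coloring.mk
    (fun v => ⟨if (v : ℕ) = 0 then (n - 2 + 1) / 2 - 1 else if (v : ℕ) = n - 1 then 0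
      else ((v : ℕ) - 1) / 2, by have := v.isLt; split_ifs <;> omega⟩)
    (fun {u v} hadj => by
      rw [deltaComp_pathGraph_adj (by omega)] at hadj
      have := u.isLt
      have := v.isLt
      simp only [ne_eq, Fin.mk.injEq]
      split_ifs <;> omega)

end SimpleGraph

lemma Fin.card_filter_ne_zero_ne_sub_one {n : ℕ} (hn : 2 ≤ n) :
    (Finset.univ.filter fun v : Fin n => (v : ℕ) ≠ 0 ∧ (v : ℕ) ≠ n - 1).card = n - 2 := by
  have hne : (⟨0, by omega⟩ : Fin n) ≠ ⟨n - 1, by omega⟩ := by simp; omega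
  have : Finset.univ.filter fun v : Fin n => (v : ℕ) ≠ 0 ∧ (v : ℕ) ≠ n - 1 =
      Finset.univ \ {⟨0, by omega⟩, ⟨n - 1, by omega⟩} := by
    ext v
    simp [Fin.ext_iff]
  rw [this, Finset.card_sdiff_of_subset (Finset.subset_univ _), Finset.card_pair hne,
    Finset.card_univ, Fintype.card_fin]

/-- For `n ≥ 5`, `χ_δ(P_n) = ⌈(n-2)/2⌉`. -/
theorem deltaChrom_pathGraph (n : ℕ) (hn : 5 ≤ n) :
    deltaChrom (pathGraph n) = (((n - 2 + 1) / 2 : ℕ) : ℕ∞) := by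
  rw [deltaChrom]
  refine le_antisymm (Colorable.chromaticNumber_le ⟨deltaComp_pathGraph_coloring n hn⟩)
    (le_chromaticNumber_iff_coloring.2 fun m C => ?_)
  have hinterior := card_le_mul_card_of_deltaComp_coloring (pathGraph.bicoloring n).colorable C
    (s := Finset.univ.filter fun v : Fin n => (v : ℕ) ≠ 0 ∧ (v : ℕ) ≠ n - 1) fun u hu v hv => by
      simp only [Finset.mem_filter, Finset.mem_univ, true_and] at hu hv
      rw [pathGraph_degree (by omega), pathGraph_degree (by omega), if_neg (by omega),
        if_neg (by omega)]
  rw [Fin.card_filter_ne_zero_ne_sub_one (by omega), Fintype.card_bool, Fintype.card_fin]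
    at hinterior
  exact_mod_cast (by omega : (n - 2 + 1) / 2 ≤ m)
end

section
/- For graphs G and H, the δ-complement of the Cartesian product G □ H has edge set equal to E(G_δ □ H_δ) ∪ S, where S consists of pairs uv with u = (u₁,u₂), v = (v₁,v₂) such that u₁ ≠ v₁, u₂ ≠ v₂, and deg_{G□H}(u) = deg_{G□H}(v). -/
open scoped Classical
open SimpleGraph

namespace SimpleGraph

variable {V W : Type*}

lemma boxProd_not_adj_of_ne_of_ne {G : SimpleGraph V} {H : SimpleGraph W} {a₁ a₂ : V}
    {b₁ b₂ : W} (ha : a₁ ≠ a₂) (hb : b₁ ≠ b₂) : ¬ (G □ H).Adj (a₁, b₁) (a₂, b₂) := by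
  simp [boxProd_adj, ha, hb]

variable [Fintype V] [Fintype W]

lemma deltaComp_adj {G : SimpleGraph V} {u v : V} :
    (deltaComp G).Adj u v ↔ u ≠ v ∧ ((G.degree u = G.degree v ∧ ¬ G.Adj u v) ∨
      (G.degree u ≠ G.degree v ∧ G.Adj u v)) := Iff.rfl

lemma deltaComp_adj_iff_of_not_adj {G : SimpleGraph V} {u v : V} (h : ¬ G.Adj u v) :
    (deltaComp G).Adj u v ↔ u ≠ v ∧ G.degree u = G.degree v := by
  simp only [deltaComp_adj, h, not_false_eq_true, and_true, and_false, or_false]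

lemma deltaComp_adj_congr {G : SimpleGraph V} {H : SimpleGraph W} {u v : V} {u' v' : W}
    (hne : u ≠ v ↔ u' ≠ v') (hdeg : G.degree u = G.degree v ↔ H.degree u' = H.degree v')
    (hadj : G.Adj u v ↔ H.Adj u' v') :
    (deltaComp G).Adj u v ↔ (deltaComp H).Adj u' v' := by
  rw [deltaComp_adj, deltaComp_adj, hne, hadj, ne_eq (G.degree u), hdeg]

variable (G : SimpleGraph V) (H : SimpleGraph W)

lemma deltaComp_boxProd_adj_left {a₁ a₂ : V} {b : W} :
    (deltaComp (G □ H)).Adj (a₁, b) (a₂, b) ↔ (deltaComp G).Adj a₁ a₂ :=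
  deltaComp_adj_congr (by simp) (by simp [degree_boxProd]) boxProd_adj_left

lemma deltaComp_boxProd_adj_right {a : V} {b₁ b₂ : W} :
    (deltaComp (G □ H)).Adj (a, b₁) (a, b₂) ↔ (deltaComp H).Adj b₁ b₂ :=
  deltaComp_adj_congr (by simp) (by simp [degree_boxProd]) boxProd_adj_right

end SimpleGraph

/-- The edges of `(G □ H)_δ` are exactly the edges of `G_δ □ H_δ` together with
the pairs differing in both coordinates and having equal degrees in `G □ H`. -/
theorem deltaComp_boxProd_adj {V W : Type*} [Fintype V] [Fintype W]
    (G : SimpleGraph V) (H : SimpleGraph W) (u v : V × W) :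
    (deltaComp (G □ H)).Adj u v ↔
      ((deltaComp G □ deltaComp H).Adj u v ∨
        (u.1 ≠ v.1 ∧ u.2 ≠ v.2 ∧ (G □ H).degree u = (G □ H).degree v)) := by
  obtain ⟨a₁, b₁⟩ := u
  obtain ⟨a₂, b₂⟩ := v
  rcases eq_or_ne a₁ a₂ with rfl | ha
  · rcases eq_or_ne b₁ b₂ with rfl | hb
    · simp
    · simp [deltaComp_boxProd_adj_right]
  · rcases eq_or_ne b₁ b₂ with rfl | hb
    · simp [deltaComp_boxProd_adj_left]
    · rw [deltaComp_adj_iff_of_not_adj (boxProd_not_adj_of_ne_of_ne ha hb)]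
      simp [degree_boxProd, ha, hb]
end

section
/- Let G and H be finite graphs such that no positive difference of two vertex degrees in G equals a positive difference of two vertex degrees in H. Then χ_δ(G □ H) ≤ n_max(H) · max{χ_δ(G), m(H)}, where n_max(H) is the maximum number of vertices of H sharing the same degree and m(H) is the number of distinct degrees occurring in H. -/
open scoped Classical
open SimpleGraph

/-- The maximum number of vertices of `H` sharing the same degree. -/
noncomputable def nMaxDeg {W : Type*} [Fintype W] (H : SimpleGraph W) : ℕ :=
  Finset.univ.sup fun x : W =>
    (Finset.univ.filter fun y : W => H.degree y = H.degree x).card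

/-- The number of distinct degrees occurring in `H`. -/
noncomputable def numDeg {W : Type*} [Fintype W] (H : SimpleGraph W) : ℕ :=
  (Finset.univ.image fun y : W => H.degree y).card

/-!
The hypothesis makes `deg (u, x) = deg_G u + deg_H x` determine both summands. Hence an edge of
`(G □ H)_δ` joins two vertices that either lie in one copy of `G` and are adjacent in `G_δ`, or
lie in one copy of `H` and have different `H`-degrees, or have distinct second coordinates of equal
`H`-degree. Colour `(u, x)` by the position of `x` in its degree class of `H` (at most `n_max(H)`
values) together with the entry of a Latin rectangle at row `c u` and column `rank (deg_H x)`,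
where `c` colours `G_δ` with `χ_δ(G)` colours and the rank takes `m(H)` values; such a rectangle
needs only `max (χ_δ(G), m(H))` symbols.
-/

open Function Finset

theorem exists_injective_prod_fin_of_card_fiber_le {α β : Type*} [Fintype α] [DecidableEq β]
    (f : α → β) {n : ℕ} (hn : ∀ x, #{y | f y = f x} ≤ n) :
    ∃ g : α → Fin n, Injective fun x => (f x, g x) := by
  have hfiber : ∀ b, Nonempty ({y // f y = b} ↪ Fin n) := by
    intro b
    refine Embedding.nonempty_of_card_le ?_
    rw [Fintype.card_fin, Fintype.card_subtype]
    by_cases hb : ∃ x, f x = b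
    · obtain ⟨x, rfl⟩ := hb
      exact hn x
    · simp [not_exists.1 hb]
  have e : ∀ b, {y // f y = b} ↪ Fin n := fun b => (hfiber b).some
  refine ⟨fun x => e (f x) ⟨x, rfl⟩, ?_⟩
  -- `x ↦ (f x, g x)` is `α ≃ Σ b, f⁻¹' {b}` followed by the fibrewise embeddings `e b`.
  exact (Equiv.sigmaEquivProd β (Fin n)).injective.comp
    ((injective_id.sigma_map fun b => (e b).injective).comp (Equiv.sigmaFiberEquiv f).symm.injective)

theorem exists_latin_rectangle (k m : ℕ) :
    ∃ s : Fin k → Fin m → Fin (max k m),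
      (∀ j, Injective fun i => s i j) ∧ ∀ i, Injective (s i) := by
  refine ⟨fun i j => Fin.castLE (le_max_left k m) i + Fin.castLE (le_max_right k m) j, ?_, ?_⟩
  · intro j i i' h
    exact Fin.castLE_injective _ (add_right_cancel h)
  · intro i j j' h
    exact Fin.castLE_injective _ (add_left_cancel h)

section

variable {V W : Type*} [Fintype V] [Fintype W] {G : SimpleGraph V} {H : SimpleGraph W}

def NoCommonDegreeDiff (G : SimpleGraph V) (H : SimpleGraph W) : Prop :=
  ∀ (u v : V) (x y : W),
    (G.degree u : ℤ) - G.degree v = (H.degree x : ℤ) - H.degree y → G.degree u = G.degree v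

theorem NoCommonDegreeDiff.degree_eq_of_degree_add_eq (hdeg : NoCommonDegreeDiff G H)
    {u v : V} {x y : W} (h : G.degree u + H.degree x = G.degree v + H.degree y) :
    G.degree u = G.degree v ∧ H.degree x = H.degree y := by
  have hG : G.degree u = G.degree v := hdeg u v y x (by omega)
  exact ⟨hG, by omega⟩

theorem deltaComp_boxProd_adj_s8 (hdeg : NoCommonDegreeDiff G H) {u v : V} {x y : W}
    (h : (deltaComp (G □ H)).Adj (u, x) (v, y)) :
    (x = y ∧ (deltaComp G).Adj u v) ∨ (u = v ∧ H.degree x ≠ H.degree y) ∨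
      (H.degree x = H.degree y ∧ x ≠ y) := by
  obtain ⟨hne, hadj⟩ := h
  simp only [degree_boxProd] at hadj
  rcases hadj with ⟨hd, hnadj⟩ | ⟨hd, hadj⟩
  · obtain ⟨hG, hH⟩ := hdeg.degree_eq_of_degree_add_eq hd
    by_cases hxy : x = y
    · subst hxy
      refine Or.inl ⟨rfl, fun huv => hne (by rw [huv]), Or.inl ⟨hG, fun hGuv => ?_⟩⟩
      exact hnadj (boxProd_adj.2 (Or.inl ⟨hGuv, rfl⟩))
    · exact Or.inr (Or.inr ⟨hH, hxy⟩)
  · rcases boxProd_adj.1 hadj with ⟨hGuv, rfl : x = y⟩ | ⟨hHxy, rfl : u = v⟩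
    · exact Or.inl ⟨rfl, hGuv.ne, Or.inr ⟨fun hG => hd (by rw [hG]), hGuv⟩⟩
    · exact Or.inr (Or.inl ⟨rfl, fun hH => hd (by rw [hH])⟩)

theorem deltaComp_boxProd_colorable (hdeg : NoCommonDegreeDiff G H) {k : ℕ}
    (hk : (deltaComp G).Colorable k) :
    (deltaComp (G □ H)).Colorable (nMaxDeg H * max k (numDeg H)) := by
  obtain ⟨c⟩ := hk
  have hclass (x : W) : #{y | H.degree y = H.degree x} ≤ nMaxDeg H :=
    le_sup (f := fun x => #{y | H.degree y = H.degree x}) (mem_univ x)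
  obtain ⟨slot, hslot⟩ := exists_injective_prod_fin_of_card_fiber_le (fun y => H.degree y) hclass
  let rank : W → Fin (numDeg H) := fun x =>
    (univ.image fun y => H.degree y).equivFin ⟨H.degree x, mem_image_of_mem _ (mem_univ x)⟩
  have hrank {x y : W} (h : rank x = rank y) : H.degree x = H.degree y :=
    congrArg Subtype.val ((univ.image fun y => H.degree y).equivFin.injective h)
  obtain ⟨s, hs_col, hs_row⟩ := exists_latin_rectangle k (numDeg H)
  let C : (deltaComp (G □ H)).Coloring (Fin (nMaxDeg H) × Fin (max k (numDeg H))) :=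
    Coloring.mk (fun p => (slot p.2, s (c p.1) (rank p.2))) fun {p q} hpq heq => by
      obtain ⟨u, x⟩ := p
      obtain ⟨v, y⟩ := q
      obtain ⟨hslot_eq, hs_eq⟩ := Prod.ext_iff.1 heq
      rcases deltaComp_boxProd_adj_s8 hdeg hpq with ⟨rfl, hG⟩ | ⟨rfl, hH⟩ | ⟨hH, hxy⟩
      · exact c.valid hG (hs_col _ hs_eq)
      · exact hH (hrank (hs_row _ hs_eq))
      · exact hxy (hslot (Prod.ext hH hslot_eq))
  simpa using C.colorable

end

/-- If no positive degree difference in `G` equals a positive degree difference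
in `H`, then `χ_δ(G □ H) ≤ n_max(H) · max {χ_δ(G), m(H)}`. -/
theorem deltaChrom_boxProd_le {V W : Type*} [Fintype V] [Fintype W]
    (G : SimpleGraph V) (H : SimpleGraph W)
    (hdeg : ∀ (u v : V) (x y : W),
      (G.degree u : ℤ) - G.degree v = (H.degree x : ℤ) - H.degree y →
        G.degree u = G.degree v) :
    deltaChrom (G □ H) ≤
      (nMaxDeg H : ℕ∞) * max (deltaChrom G) ((numDeg H : ℕ) : ℕ∞) := by
  set k := (deltaComp G).chromaticNumber.toNat
  have hk : deltaChrom G = k :=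
    (ENat.natCast_toNat (chromaticNumber_ne_top_iff_exists.2 ⟨_, colorable_of_fintype _⟩)).symm
  calc deltaChrom (G □ H) ≤ ((nMaxDeg H * max k (numDeg H) : ℕ) : ℕ∞) :=
        (deltaComp_boxProd_colorable hdeg (colorable_chromaticNumber_of_fintype _)).chromaticNumber_le
    _ = (nMaxDeg H : ℕ∞) * max (deltaChrom G) ((numDeg H : ℕ) : ℕ∞) := by
        rw [hk, Nat.cast_mul, Nat.mono_cast.map_max]
end

section
/- Let G be a finite graph with χ_δ(G) ≥ 2 such that no two vertices u, v of G satisfy deg(v) = deg(u) + 1. Then χ_δ(G □ P₃) ≤ 2 χ_δ(G). -/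
/-! Given a colouring `c` of the δ-complement of `G`, colour the vertex `(u, i)` of `G □ P₃` by
the pair (`i` is the last layer, `c u`), where on the middle layer `c u` is moved by a
fixed-point-free permutation of the colours. Inside a layer the δ-complement of `G □ P₃` is that
of `G`; the two end layers are told apart by the first component; and between neighbouring layers
the degrees differ by one, so the degree hypothesis forces δ-adjacent vertices there to be copies
of the same vertex, which the permutation separates.
-/

open scoped Classical
open SimpleGraph

section BoxProd

variable {V W : Type*} [Fintype V] [Fintype W] {G : SimpleGraph V} {H : SimpleGraph W}

theorem deltaComp_boxProd_adj_same_right {u v : V} {i : W} :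
    (deltaComp (G □ H)).Adj (u, i) (v, i) ↔ (deltaComp G).Adj u v := by
  simp [deltaComp, degree_boxProd, boxProd_adj]

theorem eq_of_deltaComp_boxProd_adj (hdeg : ∀ u v : V, G.degree v ≠ G.degree u + 1)
    {u v : V} {i j : W} (hij : H.degree j = H.degree i + 1)
    (h : (deltaComp (G □ H)).Adj (u, i) (v, j)) : u = v := by
  have hadj : (G □ H).Adj (u, i) (v, j) := by
    refine (h.2.resolve_left ?_).2
    rintro ⟨hdeg_eq, -⟩
    simp only [degree_boxProd, hij] at hdeg_eq
    exact hdeg v u (by omega)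
  rcases boxProd_adj.mp hadj with ⟨-, hji⟩ | ⟨-, huv⟩
  · change i = j at hji
    subst hji
    omega
  · exact huv

end BoxProd

theorem pathGraph_three_degree (i : Fin 3) :
    (pathGraph 3).degree i = if i = 1 then 2 else 1 := by
  rw [← card_neighborFinset_eq_degree, neighborFinset_eq_filter]
  fin_cases i <;> simp [pathGraph_adj] <;> decide

theorem deltaComp_boxProd_pathGraph_three_colorable {V : Type*} [Fintype V] {G : SimpleGraph V}
    (hdeg : ∀ u v : V, G.degree v ≠ G.degree u + 1) {n : ℕ} (hn : 2 ≤ n)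
    (hc : (deltaComp G).Colorable n) : (deltaComp (G □ pathGraph 3)).Colorable (2 * n) := by
  obtain ⟨c⟩ := hc
  have hσ (a : Fin n) : finRotate n a ≠ a :=
    Equiv.Perm.mem_support.mp (by simp [support_finRotate_of_le hn])
  let f (x : V × Fin 3) : Bool × Fin n :=
    (decide (x.2 = 2), if x.2 = 1 then finRotate n (c x.1) else c x.1)
  refine (Coloring.mk f ?_).colorable.mono (by simp)
  rintro ⟨u, i⟩ ⟨v, j⟩ h hf
  have hlayer : decide (i = 2) = decide (j = 2) := congrArg Prod.fst hf
  have hcol := congrArg Prod.snd hf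
  by_cases hij : i = j
  · subst hij
    refine c.valid (deltaComp_boxProd_adj_same_right.mp h) ?_
    dsimp only [f] at hcol
    split_ifs at hcol
    exacts [(finRotate n).injective hcol, hcol]
  · fin_cases i <;> fin_cases j <;> simp [f, -finRotate_apply] at hij hlayer hcol
    · obtain rfl := eq_of_deltaComp_boxProd_adj hdeg (by simp [pathGraph_three_degree]) h
      exact hσ _ hcol.symm
    · obtain rfl := eq_of_deltaComp_boxProd_adj hdeg (by simp [pathGraph_three_degree]) h.symm
      exact hσ _ hcol

/-- If `χ_δ(G) ≥ 2` and no vertex degree in `G` exceeds another by exactly one,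
then `χ_δ(G □ P₃) ≤ 2 χ_δ(G)`. -/
theorem deltaChrom_boxProd_pathGraph_three_le {V : Type*} [Fintype V]
    (G : SimpleGraph V) (hchi : 2 ≤ deltaChrom G)
    (hdeg : ∀ u v : V, G.degree v ≠ G.degree u + 1) :
    deltaChrom (G □ pathGraph 3) ≤ 2 * deltaChrom G := by
  obtain ⟨n, hn⟩ : ∃ n : ℕ, n = deltaChrom G := ENat.ne_top_iff_exists.mp <|
    chromaticNumber_ne_top_iff_exists.mpr ⟨_, (deltaComp G).colorable_of_fintype⟩
  have hcol : (deltaComp G).Colorable n := chromaticNumber_le_iff_colorable.mp hn.ge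
  have h2n : 2 ≤ n := by exact_mod_cast hn.symm ▸ hchi
  calc deltaChrom (G □ pathGraph 3) ≤ (2 * n : ℕ) :=
        (deltaComp_boxProd_pathGraph_three_colorable hdeg h2n hcol).chromaticNumber_le
    _ = 2 * deltaChrom G := by rw [← hn]; push_cast; rfl
end
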